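/- arXiv:1201.4663 — 2 statements merged into one kernel-verified Lean document; each statement's English description precedes it below -/
import Mathlib

section
/- Let (V_I, D) be a hypercube complex over 𝔽₂ on {0,1}^N in which every V_I is finite-dimensional. Then dim_{𝔽₂} H(V, D) ≤ Σ_{I ∈ {0,1}^N} dim_{𝔽₂} H(V_I, d_I). (This is the algebraic content of Corollary 1.2 in the ungraded case: the rank of the homology of the total complex is bounded by the total rank of the E₁ page of the spectral sequence of the cubic filtration.) -/
/-- The `(J,I)` component of an endomorphism `D` of the product `∀ I, V I`. -/
noncomputable def hcComp {ι : Type*} [DecidableEq ι] (V : ι → Type*)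
    [∀ i, AddCommGroup (V i)] [∀ i, Module (ZMod 2) (V i)]
    (D : (∀ i, V i) →ₗ[ZMod 2] (∀ i, V i)) (J I : ι) : V I →ₗ[ZMod 2] V J :=
  (LinearMap.proj J).comp (D.comp (LinearMap.single (ZMod 2) V I))

/-- The weight `w(I) = Σ_i I_i` of a vertex of the hypercube `{0,1}^N`. -/
def wt {N : ℕ} (I : Fin N → Bool) : ℕ :=
  (Finset.univ.filter fun i => I i = true).card

/-- Homology `ker d ⧸ im d` of a differential `d` (an endomorphism with `d ∘ d = 0`). -/
abbrev Hmlg {W : Type*} [AddCommGroup W] [Module (ZMod 2) W] (d : W →ₗ[ZMod 2] W) :=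
  LinearMap.ker d ⧸ (LinearMap.range d).comap (LinearMap.ker d).subtype

/-!
Over a field, `dim H(W, d) = dim W - 2 rank d`, so the inequality is equivalent to
`Σ_I rank d_I ≤ rank D`: the rank of a block upper-triangular map is at least the total rank
of its diagonal blocks. This is proved by peeling off minimal vertices from upper sets `s`:
`D` preserves the space of vectors supported on `s`, and projecting `D(supported on s)` onto
a minimal vertex `m` of `s` hits all of `range d_m` while killing `D(supported on s \ {m})`.
-/

open Module LinearMap

theorem finrank_add_finrank_le_of_le_map_of_le_ker {K M P : Type*} [DivisionRing K]
    [AddCommGroup M] [Module K M] [FiniteDimensional K M] [AddCommGroup P] [Module K P]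
    (f : M →ₗ[K] P) {A B : Submodule K M} {W : Submodule K P}
    (hW : W ≤ A.map f) (hBA : B ≤ A) (hB : B ≤ ker f) :
    finrank K W + finrank K B ≤ finrank K A := by
  have hker : B.comap A.subtype ≤ ker (f.domRestrict A) := by
    rw [ker_domRestrict]
    exact Submodule.comap_mono hB
  calc finrank K W + finrank K B
      = finrank K W + finrank K (B.comap A.subtype) := by
        rw [(Submodule.comapSubtypeEquivOfLe hBA).finrank_eq]
    _ ≤ finrank K (range (f.domRestrict A)) + finrank K (ker (f.domRestrict A)) := by
        rw [range_domRestrict]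
        exact add_le_add (Submodule.finrank_mono hW) (Submodule.finrank_mono hker)
    _ = finrank K A := (f.domRestrict A).finrank_range_add_finrank_ker

theorem finrank_hmlg_add_two_mul_finrank_range {W : Type*} [AddCommGroup W]
    [Module (ZMod 2) W] [Module.Finite (ZMod 2) W] {d : W →ₗ[ZMod 2] W} (hd : d.comp d = 0) :
    finrank (ZMod 2) (Hmlg d) + 2 * finrank (ZMod 2) (range d) = finrank (ZMod 2) W := by
  have hquot :
      finrank (ZMod 2) (Hmlg d) + finrank (ZMod 2) (range d) = finrank (ZMod 2) (ker d) := by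
    rw [← (Submodule.comapSubtypeEquivOfLe (range_le_ker_iff.mpr hd)).finrank_eq]
    exact Submodule.finrank_quotient_add_finrank _
  have hrank := d.finrank_range_add_finrank_ker
  omega

section Supported

variable (R : Type*) {ι : Type*} (V : ι → Type*) [Semiring R] [∀ i, AddCommMonoid (V i)]
  [∀ i, Module R (V i)]

def supportedOn (s : Set ι) : Submodule R (∀ i, V i) :=
  Submodule.pi sᶜ fun _ => ⊥

variable {R V}

theorem mem_supportedOn {s : Set ι} {v : ∀ i, V i} :
    v ∈ supportedOn R V s ↔ ∀ i ∉ s, v i = 0 := by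
  simp [supportedOn, Submodule.mem_pi]

theorem supportedOn_mono {s t : Set ι} (hst : s ⊆ t) : supportedOn R V s ≤ supportedOn R V t :=
  fun _ hv => mem_supportedOn.mpr fun i hi => mem_supportedOn.mp hv i fun his => hi (hst his)

theorem supportedOn_univ : supportedOn R V Set.univ = ⊤ :=
  eq_top_iff.mpr fun _ _ => mem_supportedOn.mpr fun i hi => absurd (Set.mem_univ i) hi

theorem single_mem_supportedOn [DecidableEq ι] {s : Set ι} {i : ι} (hi : i ∈ s) (x : V i) :
    Pi.single i x ∈ supportedOn R V s :=
  mem_supportedOn.mpr fun _ hj => Pi.single_eq_of_ne (by rintro rfl; exact hj hi) x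

end Supported

section Triangular

variable {ι : Type*} [DecidableEq ι] {V : ι → Type*} [∀ i, AddCommGroup (V i)]
  [∀ i, Module (ZMod 2) (V i)]

theorem hcComp_apply (D : (∀ i, V i) →ₗ[ZMod 2] (∀ i, V i)) (J I : ι) (x : V I) :
    hcComp V D J I x = D (Pi.single I x) J :=
  rfl

theorem apply_eq_sum_hcComp [Fintype ι] (D : (∀ i, V i) →ₗ[ZMod 2] (∀ i, V i))
    (v : ∀ i, V i) (J : ι) : D v J = ∑ I, hcComp V D J I (v I) := by
  conv_lhs => rw [← Finset.univ_sum_single v]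
  simp [map_sum, hcComp_apply]

variable [Fintype ι] [PartialOrder ι]

theorem hcComp_comp_diag {D E : (∀ i, V i) →ₗ[ZMod 2] (∀ i, V i)}
    (hD : ∀ I J : ι, ¬ I ≤ J → hcComp V D J I = 0)
    (hE : ∀ I J : ι, ¬ I ≤ J → hcComp V E J I = 0) (I : ι) :
    hcComp V (D.comp E) I I = (hcComp V D I I).comp (hcComp V E I I) := by
  ext x
  rw [comp_apply, hcComp_apply, comp_apply, apply_eq_sum_hcComp]
  refine Finset.sum_eq_single I (fun K _ hKI => ?_) (by simp)
  by_cases hK : K ≤ I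
  · rw [← hcComp_apply, hE I K fun h => hKI (le_antisymm hK h), LinearMap.zero_apply, map_zero]
  · rw [hD K I hK, LinearMap.zero_apply]

theorem map_supportedOn_le {D : (∀ i, V i) →ₗ[ZMod 2] (∀ i, V i)}
    (hD : ∀ I J : ι, ¬ I ≤ J → hcComp V D J I = 0) {s : Set ι} (hs : IsUpperSet s) :
    (supportedOn (ZMod 2) V s).map D ≤ supportedOn (ZMod 2) V s := by
  rintro _ ⟨v, hv, rfl⟩
  refine mem_supportedOn.mpr fun J hJ => ?_
  rw [apply_eq_sum_hcComp]
  refine Finset.sum_eq_zero fun I _ => ?_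
  by_cases hI : I ∈ s
  · rw [hD I J fun hIJ => hJ (hs hIJ hI), LinearMap.zero_apply]
  · rw [mem_supportedOn.mp hv I hI, map_zero]

variable [∀ i, Module.Finite (ZMod 2) (V i)]

theorem finrank_range_diag_add_finrank_map_le {D : (∀ i, V i) →ₗ[ZMod 2] (∀ i, V i)}
    (hD : ∀ I J : ι, ¬ I ≤ J → hcComp V D J I = 0) {s : Finset ι} {m : ι} (hm : m ∈ s)
    (hs : IsUpperSet (s.erase m : Set ι)) :
    finrank (ZMod 2) (range (hcComp V D m m)) +
        finrank (ZMod 2) ((supportedOn (ZMod 2) V (s.erase m)).map D) ≤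
      finrank (ZMod 2) ((supportedOn (ZMod 2) V s).map D) := by
  refine finrank_add_finrank_le_of_le_map_of_le_ker (proj m) ?_
    (Submodule.map_mono (supportedOn_mono (Finset.coe_subset.mpr (s.erase_subset m)))) ?_
  · rintro _ ⟨x, rfl⟩
    exact ⟨D (Pi.single m x), ⟨Pi.single m x, single_mem_supportedOn hm x, rfl⟩, rfl⟩
  · exact (map_supportedOn_le hD hs).trans fun v hv =>
      mem_supportedOn.mp hv m (s.notMem_erase m)

theorem sum_finrank_range_diag_le_finrank_map {D : (∀ i, V i) →ₗ[ZMod 2] (∀ i, V i)}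
    (hD : ∀ I J : ι, ¬ I ≤ J → hcComp V D J I = 0) (s : Finset ι)
    (hs : IsUpperSet (s : Set ι)) :
    ∑ I ∈ s, finrank (ZMod 2) (range (hcComp V D I I)) ≤
      finrank (ZMod 2) ((supportedOn (ZMod 2) V s).map D) := by
  induction s using Finset.strongInduction with
  | H s ih =>
    rcases s.eq_empty_or_nonempty with rfl | hne
    · simp
    obtain ⟨m, hm⟩ := Finset.exists_minimal hne
    have hs' : IsUpperSet (s.erase m : Set ι) := by
      rw [Finset.coe_erase]
      exact hs.erase fun b hb hbm => hm.eq_of_le hb hbm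
    rw [← Finset.add_sum_erase s _ hm.prop]
    exact (add_le_add_right (ih _ (Finset.erase_ssubset hm.prop) hs') _).trans
      (finrank_range_diag_add_finrank_map_le hD hm.prop hs')

theorem sum_finrank_range_diag_le_finrank_range {D : (∀ i, V i) →ₗ[ZMod 2] (∀ i, V i)}
    (hD : ∀ I J : ι, ¬ I ≤ J → hcComp V D J I = 0) :
    ∑ I, finrank (ZMod 2) (range (hcComp V D I I)) ≤ finrank (ZMod 2) (range D) := by
  have h := sum_finrank_range_diag_le_finrank_map hD Finset.univ (by simp [isUpperSet_univ])
  rwa [Finset.coe_univ, supportedOn_univ, Submodule.map_top] at h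

end Triangular

theorem hypercube_rank_inequality_general
    (N : ℕ) (V : (Fin N → Bool) → Type*)
    [∀ I, AddCommGroup (V I)] [∀ I, Module (ZMod 2) (V I)]
    [∀ I, Module.Finite (ZMod 2) (V I)]
    (D : (∀ I, V I) →ₗ[ZMod 2] (∀ I, V I))
    (hD2 : D.comp D = 0)
    (hsupp : ∀ I J : Fin N → Bool, ¬ I ≤ J → hcComp V D J I = 0) :
    Module.finrank (ZMod 2) (Hmlg D) ≤
      ∑ I : Fin N → Bool, Module.finrank (ZMod 2) (Hmlg (hcComp V D I I)) := by
  have hdiag I : (hcComp V D I I).comp (hcComp V D I I) = 0 := by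
    rw [← hcComp_comp_diag hsupp hsupp, hD2]
    rfl
  have hrank := sum_finrank_range_diag_le_finrank_range hsupp
  have htotal := finrank_hmlg_add_two_mul_finrank_range hD2
  have hvertex : ∑ I, (finrank (ZMod 2) (Hmlg (hcComp V D I I)) +
      2 * finrank (ZMod 2) (range (hcComp V D I I))) = ∑ I, finrank (ZMod 2) (V I) :=
    Finset.sum_congr rfl fun I _ => finrank_hmlg_add_two_mul_finrank_range (hdiag I)
  rw [finrank_pi_fintype] at htotal
  rw [Finset.sum_add_distrib, ← Finset.mul_sum] at hvertex
  omega

/-- For a hypercube complex over 𝔽₂ with finite-dimensional vertex spaces, the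
dimension of the homology of the total complex is bounded by the sum of the
dimensions of the homologies of the diagonal differentials (the E₁ page). -/
theorem hypercube_rank_inequality
    (N : ℕ) (hN : 1 ≤ N) (V : (Fin N → Bool) → Type*)
    [∀ I, AddCommGroup (V I)] [∀ I, Module (ZMod 2) (V I)]
    [∀ I, Module.Finite (ZMod 2) (V I)]
    (D : (∀ I, V I) →ₗ[ZMod 2] (∀ I, V I))
    (hD2 : D.comp D = 0)
    (hsupp : ∀ I J : Fin N → Bool, ¬ I ≤ J → hcComp V D J I = 0) :
    Module.finrank (ZMod 2) (Hmlg D) ≤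
      ∑ I : Fin N → Bool, Module.finrank (ZMod 2) (Hmlg (hcComp V D I I)) :=
  hypercube_rank_inequality_general N V D hD2 hsupp
end

section
/- Let k ≥ 1 and let ψ : ℝ → ℝ be a C^∞ function which is equal to π on a neighborhood of 0. Define τ : ℝ^{k+1} × ℝ^{k+1} → ℝ^{k+1} × ℝ^{k+1} by τ(x, y) = ( cos(ψ(‖y‖))·x + s(y)·y , −‖y‖·sin(ψ(‖y‖))·x + cos(ψ(‖y‖))·y ), where s(y) = sin(ψ(‖y‖))/‖y‖ for y ≠ 0 and s(0) = 0. Then: (1) τ is C^∞ on all of ℝ^{k+1} × ℝ^{k+1}; (2) τ(x, 0) = (−x, 0) for every x, i.e. τ restricts to the antipodal map on the zero section; (3) τ maps the set T = {(x, y) : ‖x‖ = 1 and ⟨x, y⟩ = 0} into itself and preserves ‖y‖ on T; and (4) τ restricts to a bijection of T onto itself. (This is the model generalized Dehn twist on T*S^k ⊂ ℂ^{k+1} of Section 2, shown there to extend smoothly over the zero section and to act as the antipodal map on it.) -/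
open Real Classical

/-- The coefficient `s(y) = sin(ψ(‖y‖))/‖y‖` (with `s(0) = 0`) appearing in the model
generalized Dehn twist. -/
noncomputable def twistCoeff (k : ℕ) (ψ : ℝ → ℝ)
    (y : EuclideanSpace ℝ (Fin (k + 1))) : ℝ :=
  if y = 0 then 0 else Real.sin (ψ ‖y‖) / ‖y‖

/-- The model generalized Dehn twist `τ` on `ℝ^{k+1} × ℝ^{k+1} ≅ ℂ^{k+1}`:
`τ(x,y) = (cos(ψ‖y‖)·x + s(y)·y, −‖y‖ sin(ψ‖y‖)·x + cos(ψ‖y‖)·y)`. -/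
noncomputable def modelDehnTwist (k : ℕ) (ψ : ℝ → ℝ)
    (p : EuclideanSpace ℝ (Fin (k + 1)) × EuclideanSpace ℝ (Fin (k + 1))) :
    EuclideanSpace ℝ (Fin (k + 1)) × EuclideanSpace ℝ (Fin (k + 1)) :=
  (Real.cos (ψ ‖p.2‖) • p.1 + twistCoeff k ψ p.2 • p.2,
   (-(‖p.2‖ * Real.sin (ψ ‖p.2‖))) • p.1 + Real.cos (ψ ‖p.2‖) • p.2)

section Aux

variable {k : ℕ}

local notation "E" => EuclideanSpace ℝ (Fin (k + 1))

lemma dehnAux_norm_comb_sq (x y : E) (hx : ‖x‖ = 1) (hxy : (inner ℝ x y : ℝ) = 0)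
    (a b : ℝ) : ‖a • x + b • y‖ ^ 2 = a ^ 2 + b ^ 2 * ‖y‖ ^ 2 := by
  rw [norm_add_sq_real, norm_smul, norm_smul, real_inner_smul_left, real_inner_smul_right,
    hxy, hx]
  simp [Real.norm_eq_abs, mul_pow, sq_abs]

lemma dehnAux_inner_comb (x y : E) (hx : ‖x‖ = 1) (hxy : (inner ℝ x y : ℝ) = 0)
    (a b c d : ℝ) :
    (inner ℝ (a • x + b • y) (c • x + d • y) : ℝ) = a * c + b * d * ‖y‖ ^ 2 := by
  have hyx : (inner ℝ y x : ℝ) = 0 := by rw [real_inner_comm]; exact hxy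
  simp only [inner_add_left, inner_add_right, real_inner_smul_left, real_inner_smul_right,
    hxy, hyx, real_inner_self_eq_norm_sq, hx, mul_zero, add_zero, zero_add]
  ring

/-- `τ` restricts to the antipodal map on the zero section, assuming only
`cos (ψ 0) = -1`. -/
lemma dehnAux_antipode (ψ : ℝ → ℝ) (hc : Real.cos (ψ 0) = -1) (x : E) :
    modelDehnTwist k ψ (x, 0) = (-x, 0) := by
  have h0 : ‖(0 : E)‖ = 0 := norm_zero
  have ht : twistCoeff k ψ (0 : E) = 0 := if_pos rfl
  simp only [modelDehnTwist, h0, ht, hc, zero_smul, smul_zero, add_zero, neg_zero,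
    zero_mul, neg_smul, one_smul]

/-- `τ` maps `T` into itself and preserves `‖y‖`, assuming only `cos (ψ 0) = -1`. -/
lemma dehnAux_mapsTo (ψ : ℝ → ℝ) (hc : Real.cos (ψ 0) = -1)
    (x y : E) (hx : ‖x‖ = 1) (hxy : (inner ℝ x y : ℝ) = 0) :
    ‖(modelDehnTwist k ψ (x, y)).1‖ = 1 ∧
      (inner ℝ (modelDehnTwist k ψ (x, y)).1 (modelDehnTwist k ψ (x, y)).2 : ℝ) = 0 ∧
      ‖(modelDehnTwist k ψ (x, y)).2‖ = ‖y‖ := by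
  by_cases hy : y = 0
  · subst hy
    rw [dehnAux_antipode ψ hc x]
    simp [hx]
  · have hr : ‖y‖ ≠ 0 := norm_ne_zero_iff.mpr hy
    have hrpos : 0 < ‖y‖ := norm_pos_iff.mpr hy
    set r := ‖y‖ with hrdef
    set c := Real.cos (ψ r) with hcdef
    set s := Real.sin (ψ r) with hsdef
    have hcs : s ^ 2 + c ^ 2 = 1 := Real.sin_sq_add_cos_sq (ψ r)
    have ht : twistCoeff k ψ y = s / r := if_neg hy
    have hτ : modelDehnTwist k ψ (x, y) =
        (c • x + (s / r) • y, (-(r * s)) • x + c • y) := by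
      simp [modelDehnTwist, ht, hrdef, hcdef, hsdef]
    rw [hτ]
    refine ⟨?_, ?_, ?_⟩
    · have h1 : ‖c • x + (s / r) • y‖ ^ 2 = 1 := by
        rw [dehnAux_norm_comb_sq x y hx hxy]
        field_simp
        nlinarith
      have := norm_nonneg (c • x + (s / r) • y)
      nlinarith
    · rw [dehnAux_inner_comb x y hx hxy]
      field_simp
      ring
    · have h1 : ‖(-(r * s)) • x + c • y‖ ^ 2 = r ^ 2 := by
        rw [dehnAux_norm_comb_sq x y hx hxy]
        nlinarith
      have := norm_nonneg ((-(r * s)) • x + c • y)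
      nlinarith

/-- Composing two twists with opposite angle functions gives the identity on `T`. -/
lemma dehnAux_inv (ψ₁ ψ₂ : ℝ → ℝ) (h : ∀ t, ψ₂ t = -ψ₁ t)
    (hc : Real.cos (ψ₁ 0) = -1)
    (x y : E) (hx : ‖x‖ = 1) (hxy : (inner ℝ x y : ℝ) = 0) :
    modelDehnTwist k ψ₂ (modelDehnTwist k ψ₁ (x, y)) = (x, y) := by
  have hc2 : Real.cos (ψ₂ 0) = -1 := by rw [h 0, Real.cos_neg, hc]
  by_cases hy : y = 0
  · subst hy
    rw [dehnAux_antipode ψ₁ hc x, dehnAux_antipode ψ₂ hc2 (-x), neg_neg]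
  · have hr : ‖y‖ ≠ 0 := norm_ne_zero_iff.mpr hy
    set r := ‖y‖ with hrdef
    set c := Real.cos (ψ₁ r) with hcdef
    set s := Real.sin (ψ₁ r) with hsdef
    have hcs : s ^ 2 + c ^ 2 = 1 := Real.sin_sq_add_cos_sq (ψ₁ r)
    have ht : twistCoeff k ψ₁ y = s / r := if_neg hy
    have hτ : modelDehnTwist k ψ₁ (x, y) =
        (c • x + (s / r) • y, (-(r * s)) • x + c • y) := by
      simp [modelDehnTwist, ht, hrdef, hcdef, hsdef]
    have hnorm2 : ‖(-(r * s)) • x + c • y‖ = r := by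
      have h' := (dehnAux_mapsTo ψ₁ hc x y hx hxy).2.2
      rw [hτ] at h'
      exact h'
    have hy2ne : (-(r * s)) • x + c • y ≠ 0 := by
      intro h0
      rw [h0, norm_zero] at hnorm2
      exact hr hnorm2.symm
    have hc2r : Real.cos (ψ₂ r) = c := by rw [h r, Real.cos_neg]
    have hs2r : Real.sin (ψ₂ r) = -s := by rw [h r, Real.sin_neg]
    have ht2 : twistCoeff k ψ₂ ((-(r * s)) • x + c • y) = -s / r := by
      rw [twistCoeff, if_neg hy2ne, hnorm2, hs2r]
    rw [hτ]
    simp only [modelDehnTwist, hnorm2, hc2r, hs2r, ht2]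
    rw [Prod.mk.injEq]
    constructor
    · match_scalars
      · field_simp
        linear_combination hcs
      · ring
    · match_scalars
      · ring
      · field_simp
        linear_combination hcs

/-- Smoothness of the scalar coefficient functions. -/
lemma dehnAux_smooth (ψ : ℝ → ℝ) (hψ : ContDiff ℝ (⊤ : ℕ∞) ψ)
    (hψ0 : ∀ᶠ t in nhds 0, ψ t = Real.pi) :
    ContDiff ℝ (⊤ : ℕ∞) (fun y : E => Real.cos (ψ ‖y‖)) ∧
      ContDiff ℝ (⊤ : ℕ∞) (twistCoeff k ψ) ∧
      ContDiff ℝ (⊤ : ℕ∞) (fun y : E => -(‖y‖ * Real.sin (ψ ‖y‖))) := by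
  have hloc : ∀ᶠ y in nhds (0 : E), ψ ‖y‖ = Real.pi := by
    have hcont : Filter.Tendsto (fun y : E => ‖y‖) (nhds 0) (nhds 0) := by
      simpa using continuous_norm.tendsto (0 : E)
    exact hcont.eventually hψ0
  have hne : ∀ y : E, y ≠ 0 → ContDiffAt ℝ (⊤ : ℕ∞) (fun z : E => ψ ‖z‖) y := fun y hy =>
    hψ.contDiffAt.comp y (contDiffAt_norm ℝ hy)
  refine ⟨?_, ?_, ?_⟩
  · rw [contDiff_iff_contDiffAt]
    intro y
    by_cases hy : y = 0
    · subst hy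
      refine (contDiffAt_const (c := (-1 : ℝ))).congr_of_eventuallyEq ?_
      filter_upwards [hloc] with z hz
      rw [hz, Real.cos_pi]
    · exact (Real.contDiff_cos.contDiffAt).comp y (hne y hy)
  · rw [contDiff_iff_contDiffAt]
    intro y
    by_cases hy : y = 0
    · subst hy
      refine (contDiffAt_const (c := (0 : ℝ))).congr_of_eventuallyEq ?_
      filter_upwards [hloc] with z hz
      by_cases hz0 : z = 0
      · rw [twistCoeff, if_pos hz0]
      · rw [twistCoeff, if_neg hz0, hz, Real.sin_pi, zero_div]
    · have hopen : IsOpen {z : E | z ≠ 0} := isOpen_ne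
      have heq : (fun z : E => Real.sin (ψ ‖z‖) / ‖z‖) =ᶠ[nhds y] twistCoeff k ψ := by
        filter_upwards [hopen.mem_nhds hy] with z hz
        rw [twistCoeff, if_neg hz]
      refine ContDiffAt.congr_of_eventuallyEq ?_ heq.symm
      exact ((Real.contDiff_sin.contDiffAt).comp y (hne y hy)).div
        (contDiffAt_norm ℝ hy) (norm_ne_zero_iff.mpr hy)
  · rw [contDiff_iff_contDiffAt]
    intro y
    by_cases hy : y = 0
    · subst hy
      refine (contDiffAt_const (c := (0 : ℝ))).congr_of_eventuallyEq ?_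
      filter_upwards [hloc] with z hz
      rw [hz, Real.sin_pi, mul_zero, neg_zero]
    · exact (((contDiffAt_norm ℝ hy).mul
        ((Real.contDiff_sin.contDiffAt).comp y (hne y hy))).neg)

end Aux

/-- The model generalized Dehn twist on `T*Sᵏ ⊂ ℂ^{k+1}` is smooth on all of
`ℝ^{k+1} × ℝ^{k+1}`, restricts to the antipodal map on the zero section, maps
`T = {(x,y) : ‖x‖ = 1, ⟨x,y⟩ = 0}` into itself preserving `‖y‖`, and restricts
to a bijection of `T` onto itself. -/
theorem modelDehnTwist_properties (k : ℕ) (hk : 1 ≤ k) (ψ : ℝ → ℝ)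
    (hψ : ContDiff ℝ (⊤ : ℕ∞) ψ) (hψ0 : ∀ᶠ t in nhds 0, ψ t = Real.pi) :
    ContDiff ℝ (⊤ : ℕ∞) (modelDehnTwist k ψ) ∧
    (∀ x : EuclideanSpace ℝ (Fin (k + 1)), modelDehnTwist k ψ (x, 0) = (-x, 0)) ∧
    (∀ p : EuclideanSpace ℝ (Fin (k + 1)) × EuclideanSpace ℝ (Fin (k + 1)),
      p ∈ {q : EuclideanSpace ℝ (Fin (k + 1)) × EuclideanSpace ℝ (Fin (k + 1)) |
          ‖q.1‖ = 1 ∧ (inner ℝ q.1 q.2 : ℝ) = 0} →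
      modelDehnTwist k ψ p ∈
          {q : EuclideanSpace ℝ (Fin (k + 1)) × EuclideanSpace ℝ (Fin (k + 1)) |
            ‖q.1‖ = 1 ∧ (inner ℝ q.1 q.2 : ℝ) = 0} ∧
        ‖(modelDehnTwist k ψ p).2‖ = ‖p.2‖) ∧
    Set.BijOn (modelDehnTwist k ψ)
      {q : EuclideanSpace ℝ (Fin (k + 1)) × EuclideanSpace ℝ (Fin (k + 1)) |
        ‖q.1‖ = 1 ∧ (inner ℝ q.1 q.2 : ℝ) = 0}
      {q : EuclideanSpace ℝ (Fin (k + 1)) × EuclideanSpace ℝ (Fin (k + 1)) |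
        ‖q.1‖ = 1 ∧ (inner ℝ q.1 q.2 : ℝ) = 0} := by
  have hψπ : ψ 0 = Real.pi := hψ0.self_of_nhds
  have hc : Real.cos (ψ 0) = -1 := by rw [hψπ, Real.cos_pi]
  set T := {q : EuclideanSpace ℝ (Fin (k + 1)) × EuclideanSpace ℝ (Fin (k + 1)) |
      ‖q.1‖ = 1 ∧ (inner ℝ q.1 q.2 : ℝ) = 0} with hT
  -- part 1 : smoothness
  obtain ⟨h1, h2, h3⟩ := dehnAux_smooth (k := k) ψ hψ hψ0
  have hsmooth : ContDiff ℝ (⊤ : ℕ∞) (modelDehnTwist k ψ) := by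
    apply ContDiff.prodMk
    · exact ((h1.comp contDiff_snd).smul contDiff_fst).add
        ((h2.comp contDiff_snd).smul contDiff_snd)
    · exact ((h3.comp contDiff_snd).smul contDiff_fst).add
        ((h1.comp contDiff_snd).smul contDiff_snd)
  refine ⟨hsmooth, fun x => dehnAux_antipode ψ hc x, ?_, ?_⟩
  · rintro ⟨x, y⟩ ⟨hx, hxy⟩
    obtain ⟨ha, hb, hcn⟩ := dehnAux_mapsTo ψ hc x y hx hxy
    exact ⟨⟨ha, hb⟩, hcn⟩
  · have hc2 : Real.cos ((fun t => -ψ t) 0) = -1 := by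
      simpa [Real.cos_neg] using hc
    have hmt : Set.MapsTo (modelDehnTwist k ψ) T T := by
      rintro ⟨x, y⟩ ⟨hx, hxy⟩
      obtain ⟨ha, hb, _⟩ := dehnAux_mapsTo ψ hc x y hx hxy
      exact ⟨ha, hb⟩
    have hmt2 : Set.MapsTo (modelDehnTwist k (fun t => -ψ t)) T T := by
      rintro ⟨x, y⟩ ⟨hx, hxy⟩
      obtain ⟨ha, hb, _⟩ := dehnAux_mapsTo (fun t => -ψ t) hc2 x y hx hxy
      exact ⟨ha, hb⟩
    have hinv : Set.InvOn (modelDehnTwist k (fun t => -ψ t)) (modelDehnTwist k ψ) T T := by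
      constructor
      · rintro ⟨x, y⟩ ⟨hx, hxy⟩
        exact dehnAux_inv ψ (fun t => -ψ t) (fun t => rfl) hc x y hx hxy
      · rintro ⟨x, y⟩ ⟨hx, hxy⟩
        exact dehnAux_inv (fun t => -ψ t) ψ (fun t => (neg_neg (ψ t)).symm) hc2 x y hx hxy
    exact hinv.bijOn hmt hmt2
end
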